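/- Let α ≥ 0, β ≥ 0, γ ≥ 0, σ > 0 with ασ ≥ γ². Then for every real-valued u ∈ C_c^∞(ℝ³×ℝ³): ∫_{ℝ³}∫_{ℝ³} (Au)(x,v) u(x,v) dx dv ≤ (3β/2) ∫_{ℝ³}∫_{ℝ³} u(x,v)² dx dv, i.e. the operator A − (3β/2)I is dissipative on C_c^∞ in L²(ℝ⁶). -/

import Mathlib

open MeasureTheory Real Filter ENNReal

noncomputable section

abbrev E3 := EuclideanSpace ℝ (Fin 3)

/-- The `i`-th standard basis vector of `ℝ³`. -/
def e3 (i : Fin 3) : E3 := EuclideanSpace.single i 1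

/-- The quantum Fokker-Planck generator
`Au = −v·∇_x u + β div_v(v u) + σ Δ_v u + 2γ div_v(∇_x u) + α Δ_x u`. -/
def Aop (α β γ σ : ℝ) (u : E3 × E3 → ℝ) (p : E3 × E3) : ℝ :=
  -(∑ i : Fin 3, p.2 i * fderiv ℝ u p (e3 i, 0))
    + β * (∑ i : Fin 3, fderiv ℝ (fun q : E3 × E3 => q.2 i * u q) p (0, e3 i))
    + σ * (∑ i : Fin 3, fderiv ℝ (fun q => fderiv ℝ u q (0, e3 i)) p (0, e3 i))
    + 2 * γ * (∑ i : Fin 3, fderiv ℝ (fun q => fderiv ℝ u q (e3 i, 0)) p (0, e3 i))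
    + α * (∑ i : Fin 3, fderiv ℝ (fun q => fderiv ℝ u q (e3 i, 0)) p (e3 i, 0))

instance : Measure.IsAddHaarMeasure (volume : Measure (E3 × E3)) :=
  Measure.prod.instIsAddHaarMeasure (volume : Measure E3) (volume : Measure E3)

/-- The continuous linear map `q ↦ q.2 i` on `ℝ³ × ℝ³`. -/
def coordL (i : Fin 3) : (E3 × E3) →L[ℝ] ℝ :=
  (EuclideanSpace.proj i).comp (ContinuousLinearMap.snd ℝ E3 E3)

lemma coord_eq (i : Fin 3) : (fun q : E3 × E3 => q.2 i) = ⇑(coordL i) := rfl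

lemma e3_same (i : Fin 3) : e3 i i = 1 := by
  simp [e3, EuclideanSpace.single_apply]

lemma fderiv_coord_mul {u : E3 × E3 → ℝ} (hu : Differentiable ℝ u) (i : Fin 3)
    (p v : E3 × E3) :
    fderiv ℝ (fun q : E3 × E3 => q.2 i * u q) p v
      = p.2 i * fderiv ℝ u p v + u p * v.2 i := by
  have hc : DifferentiableAt ℝ (fun q : E3 × E3 => q.2 i) p := by
    rw [coord_eq]; exact (coordL i).differentiableAt
  have hfc : fderiv ℝ (fun q : E3 × E3 => q.2 i) p = coordL i := by
    rw [coord_eq]; exact (coordL i).fderiv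
  rw [fderiv_fun_mul hc (hu p)]
  simp [hfc, coordL]

/-- Dissipativity of `A − (3β/2) I` in `L²(ℝ⁶)` on `C_c^∞`. -/
theorem Aop_dissipative_L2 (α β γ σ : ℝ) (hα : 0 ≤ α) (hβ : 0 ≤ β) (hγ : 0 ≤ γ)
    (hσ : 0 < σ) (hcoeff : γ ^ 2 ≤ α * σ) :
    ∀ u : E3 × E3 → ℝ, ContDiff ℝ (⊤ : ℕ∞) u → HasCompactSupport u →
      (∫ p : E3 × E3, Aop α β γ σ u p * u p) ≤ (3 * β / 2) * ∫ p : E3 × E3, (u p) ^ 2 := by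
  intro u hu hK
  have hu1 : Differentiable ℝ u := hu.differentiable (by simp)
  have hucont : Continuous u := hu.continuous
  -- smoothness and support of directional derivatives
  have hDsm : ∀ w : E3 × E3, ContDiff ℝ (⊤ : ℕ∞) (fun p => fderiv ℝ u p w) :=
    fun w => (hu.fderiv_right (by simp)).clm_apply contDiff_const
  have hDcont : ∀ w : E3 × E3, Continuous (fun p => fderiv ℝ u p w) :=
    fun w => (hDsm w).continuous
  have hDcs : ∀ w : E3 × E3, HasCompactSupport (fun p => fderiv ℝ u p w) :=
    fun w => (hK.fderiv ℝ).comp_left (g := fun L : (E3 × E3) →L[ℝ] ℝ => L w) rfl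
  have hD2cont : ∀ w v : E3 × E3,
      Continuous (fun p => fderiv ℝ (fun q => fderiv ℝ u q w) p v) :=
    fun w v => ContDiff.continuous (n := ((⊤ : ℕ∞) : WithTop ℕ∞))
      (((hDsm w).fderiv_right (by simp)).clm_apply contDiff_const)
  have hccont : ∀ i : Fin 3, Continuous (fun q : E3 × E3 => q.2 i) :=
    fun i => coord_eq i ▸ (coordL i).continuous
  have hcdiff : ∀ i : Fin 3, Differentiable ℝ (fun q : E3 × E3 => q.2 i) :=
    fun i => coord_eq i ▸ (coordL i).differentiable
  have hcu : ∀ i : Fin 3, ContDiff ℝ (⊤ : ℕ∞) (fun q : E3 × E3 => q.2 i * u q) :=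
    fun i => (coord_eq i ▸ (coordL i).contDiff).mul hu
  have hcucont : ∀ (i : Fin 3) (v : E3 × E3),
      Continuous (fun p => fderiv ℝ (fun q : E3 × E3 => q.2 i * u q) p v) :=
    fun i v => ContDiff.continuous (n := ((⊤ : ℕ∞) : WithTop ℕ∞))
      (((hcu i).fderiv_right (by simp)).clm_apply contDiff_const)
  -- integrability helpers
  have hmu : ∀ f : E3 × E3 → ℝ, Continuous f → Integrable (fun p => f p * u p) :=
    fun f hf => (hf.mul hucont).integrable_of_hasCompactSupport hK.mul_left
  have hmu' : ∀ f : E3 × E3 → ℝ, Continuous f → Integrable (fun p => u p * f p) :=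
    fun f hf => (hucont.mul hf).integrable_of_hasCompactSupport hK.mul_right
  have hmuD : ∀ (f : E3 × E3 → ℝ), Continuous f → ∀ w : E3 × E3,
      Integrable (fun p => f p * fderiv ℝ u p w) :=
    fun f hf w => (hf.mul (hDcont w)).integrable_of_hasCompactSupport (hDcs w).mul_left
  have hsq : Integrable (fun p : E3 × E3 => u p ^ 2) := by
    have := hmu u hucont
    simpa [pow_two] using this
  -- transport term vanishes after integration by parts
  have hT1 : ∀ i : Fin 3,
      (∫ p : E3 × E3, p.2 i * fderiv ℝ u p (e3 i, 0) * u p) = 0 := by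
    intro i
    have h := integral_mul_fderiv_eq_neg_fderiv_mul_of_integrable
      (μ := volume) (f := fun q : E3 × E3 => q.2 i * u q) (g := u)
      (v := ((e3 i, 0) : E3 × E3))
      (hmu _ (hcucont i _)) (hmuD _ ((hccont i).mul hucont) _)
      (hmu _ ((hccont i).mul hucont)) (fun x _ => ((hcdiff i).mul hu1) x) (fun x _ => hu1 x)
    have e1 : (∫ p : E3 × E3, (fun q : E3 × E3 => q.2 i * u q) p
          * fderiv ℝ u p ((e3 i, 0) : E3 × E3))
        = ∫ p : E3 × E3, p.2 i * fderiv ℝ u p (e3 i, 0) * u p :=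
      integral_congr_ae (Filter.Eventually.of_forall fun p => by simp only; try ring)
    have e2 : (∫ p : E3 × E3, fderiv ℝ (fun q : E3 × E3 => q.2 i * u q) p
          ((e3 i, 0) : E3 × E3) * u p)
        = ∫ p : E3 × E3, p.2 i * fderiv ℝ u p (e3 i, 0) * u p :=
      integral_congr_ae (Filter.Eventually.of_forall fun p => by
        beta_reduce; rw [fderiv_coord_mul hu1]; simp)
    rw [e1, e2] at h
    linarith
  -- friction term gives `(1/2) ∫ u²` per coordinate
  have hT2 : ∀ i : Fin 3,
      (∫ p : E3 × E3, fderiv ℝ (fun q : E3 × E3 => q.2 i * u q) p (0, e3 i) * u p)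
        = (1 / 2) * ∫ p : E3 × E3, u p ^ 2 := by
    intro i
    have h := integral_mul_fderiv_eq_neg_fderiv_mul_of_integrable
      (μ := volume) (f := fun q : E3 × E3 => q.2 i * u q) (g := u)
      (v := ((0, e3 i) : E3 × E3))
      (hmu _ (hcucont i _)) (hmuD _ ((hccont i).mul hucont) _)
      (hmu _ ((hccont i).mul hucont)) (fun x _ => ((hcdiff i).mul hu1) x) (fun x _ => hu1 x)
    have e1 : (∫ p : E3 × E3, (fun q : E3 × E3 => q.2 i * u q) p
          * fderiv ℝ u p ((0, e3 i) : E3 × E3))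
        = ∫ p : E3 × E3, p.2 i * u p * fderiv ℝ u p (0, e3 i) :=
      integral_congr_ae (Filter.Eventually.of_forall fun p => by simp only; try ring)
    rw [e1] at h
    have hsplit : (∫ p : E3 × E3,
        fderiv ℝ (fun q : E3 × E3 => q.2 i * u q) p (0, e3 i) * u p)
        = (∫ p : E3 × E3, p.2 i * u p * fderiv ℝ u p (0, e3 i))
          + ∫ p : E3 × E3, u p ^ 2 := by
      have e2 : (∫ p : E3 × E3,
          fderiv ℝ (fun q : E3 × E3 => q.2 i * u q) p (0, e3 i) * u p)
          = ∫ p : E3 × E3,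
              (p.2 i * u p * fderiv ℝ u p (0, e3 i) + u p ^ 2) :=
        integral_congr_ae (Filter.Eventually.of_forall fun p => by
          beta_reduce; rw [fderiv_coord_mul hu1]; simp [e3_same]; try ring)
      rw [e2]
      exact integral_add (hmuD _ ((hccont i).mul hucont) _) hsq
    rw [h] at hsplit
    linarith
  -- second order terms after integration by parts
  have hTD : ∀ w v : E3 × E3,
      (∫ p : E3 × E3, fderiv ℝ (fun q => fderiv ℝ u q w) p v * u p)
        = - ∫ p : E3 × E3, fderiv ℝ u p w * fderiv ℝ u p v := by
    intro w v
    have h := integral_mul_fderiv_eq_neg_fderiv_mul_of_integrable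
      (μ := volume) (f := u) (g := fun q => fderiv ℝ u q w) (v := v)
      (hmuD _ (hDcont v) w) (hmu' _ (hD2cont w v)) (hmu' _ (hDcont w))
      (fun x _ => hu1 x) (fun x _ => (hDsm w).differentiable (by simp) x)
    have e1 : (∫ p : E3 × E3, u p * fderiv ℝ (fun q => fderiv ℝ u q w) p v)
        = ∫ p : E3 × E3, fderiv ℝ (fun q => fderiv ℝ u q w) p v * u p :=
      integral_congr_ae (Filter.Eventually.of_forall fun p => by ring)
    have e2 : (∫ p : E3 × E3, fderiv ℝ u p v * (fun q => fderiv ℝ u q w) p)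
        = ∫ p : E3 × E3, fderiv ℝ u p w * fderiv ℝ u p v :=
      integral_congr_ae (Filter.Eventually.of_forall fun p => by simp only; try ring)
    rw [e1, e2] at h
    exact h
  -- expand the integrand into the five groups
  have expand : (fun p : E3 × E3 => Aop α β γ σ u p * u p) = fun p : E3 × E3 =>
      -(∑ i : Fin 3, p.2 i * fderiv ℝ u p (e3 i, 0) * u p)
      + β * (∑ i : Fin 3, fderiv ℝ (fun q : E3 × E3 => q.2 i * u q) p (0, e3 i) * u p)
      + σ * (∑ i : Fin 3, fderiv ℝ (fun q => fderiv ℝ u q (0, e3 i)) p (0, e3 i) * u p)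
      + 2 * γ * (∑ i : Fin 3,
          fderiv ℝ (fun q => fderiv ℝ u q (e3 i, 0)) p (0, e3 i) * u p)
      + α * (∑ i : Fin 3,
          fderiv ℝ (fun q => fderiv ℝ u q (e3 i, 0)) p (e3 i, 0) * u p) := by
    funext p
    simp only [Aop, ← Finset.sum_mul]
    ring
  -- integrability of the individual summands
  have int1 : ∀ i : Fin 3, Integrable (fun p : E3 × E3 =>
      p.2 i * fderiv ℝ u p (e3 i, 0) * u p) :=
    fun i => hmu _ ((hccont i).mul (hDcont _))
  have int2 : ∀ i : Fin 3, Integrable (fun p : E3 × E3 =>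
      fderiv ℝ (fun q : E3 × E3 => q.2 i * u q) p (0, e3 i) * u p) :=
    fun i => hmu _ (hcucont i _)
  have int3 : ∀ w v : E3 × E3, Integrable (fun p : E3 × E3 =>
      fderiv ℝ (fun q => fderiv ℝ u q w) p v * u p) :=
    fun w v => hmu _ (hD2cont w v)
  have intDD : ∀ w v : E3 × E3, Integrable (fun p : E3 × E3 =>
      fderiv ℝ u p w * fderiv ℝ u p v) :=
    fun w v => hmuD _ (hDcont w) v
  have I1 : Integrable (fun p : E3 × E3 =>
      ∑ i : Fin 3, p.2 i * fderiv ℝ u p (e3 i, 0) * u p) :=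
    integrable_finset_sum _ fun i _ => int1 i
  have I2 : Integrable (fun p : E3 × E3 =>
      ∑ i : Fin 3, fderiv ℝ (fun q : E3 × E3 => q.2 i * u q) p (0, e3 i) * u p) :=
    integrable_finset_sum _ fun i _ => int2 i
  have I3 : Integrable (fun p : E3 × E3 =>
      ∑ i : Fin 3, fderiv ℝ (fun q => fderiv ℝ u q (0, e3 i)) p (0, e3 i) * u p) :=
    integrable_finset_sum _ fun i _ => int3 _ _
  have I4 : Integrable (fun p : E3 × E3 =>
      ∑ i : Fin 3, fderiv ℝ (fun q => fderiv ℝ u q (e3 i, 0)) p (0, e3 i) * u p) :=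
    integrable_finset_sum _ fun i _ => int3 _ _
  have I5 : Integrable (fun p : E3 × E3 =>
      ∑ i : Fin 3, fderiv ℝ (fun q => fderiv ℝ u q (e3 i, 0)) p (e3 i, 0) * u p) :=
    integrable_finset_sum _ fun i _ => int3 _ _
  have G1 : Integrable (fun p : E3 × E3 =>
      -(∑ i : Fin 3, p.2 i * fderiv ℝ u p (e3 i, 0) * u p)) := I1.neg
  have G2 : Integrable (fun p : E3 × E3 =>
      β * (∑ i : Fin 3, fderiv ℝ (fun q : E3 × E3 => q.2 i * u q) p (0, e3 i) * u p)) :=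
    I2.const_mul β
  have G3 : Integrable (fun p : E3 × E3 =>
      σ * (∑ i : Fin 3, fderiv ℝ (fun q => fderiv ℝ u q (0, e3 i)) p (0, e3 i) * u p)) :=
    I3.const_mul σ
  have G4 : Integrable (fun p : E3 × E3 =>
      2 * γ * (∑ i : Fin 3,
        fderiv ℝ (fun q => fderiv ℝ u q (e3 i, 0)) p (0, e3 i) * u p)) :=
    I4.const_mul (2 * γ)
  have G5 : Integrable (fun p : E3 × E3 =>
      α * (∑ i : Fin 3,
        fderiv ℝ (fun q => fderiv ℝ u q (e3 i, 0)) p (e3 i, 0) * u p)) :=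
    I5.const_mul α
  have G12 : Integrable (fun p : E3 × E3 =>
      -(∑ i : Fin 3, p.2 i * fderiv ℝ u p (e3 i, 0) * u p)
      + β * (∑ i : Fin 3, fderiv ℝ (fun q : E3 × E3 => q.2 i * u q) p (0, e3 i) * u p)) :=
    G1.add G2
  have G123 : Integrable (fun p : E3 × E3 =>
      -(∑ i : Fin 3, p.2 i * fderiv ℝ u p (e3 i, 0) * u p)
      + β * (∑ i : Fin 3, fderiv ℝ (fun q : E3 × E3 => q.2 i * u q) p (0, e3 i) * u p)
      + σ * (∑ i : Fin 3, fderiv ℝ (fun q => fderiv ℝ u q (0, e3 i)) p (0, e3 i) * u p)) :=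
    G12.add G3
  have G1234 : Integrable (fun p : E3 × E3 =>
      -(∑ i : Fin 3, p.2 i * fderiv ℝ u p (e3 i, 0) * u p)
      + β * (∑ i : Fin 3, fderiv ℝ (fun q : E3 × E3 => q.2 i * u q) p (0, e3 i) * u p)
      + σ * (∑ i : Fin 3, fderiv ℝ (fun q => fderiv ℝ u q (0, e3 i)) p (0, e3 i) * u p)
      + 2 * γ * (∑ i : Fin 3,
          fderiv ℝ (fun q => fderiv ℝ u q (e3 i, 0)) p (0, e3 i) * u p)) :=
    G123.add G4
  rw [expand]
  rw [integral_add G1234 G5,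
      integral_add G123 G4,
      integral_add G12 G3,
      integral_add G1 G2,
      integral_neg, integral_const_mul, integral_const_mul, integral_const_mul,
      integral_const_mul,
      integral_finset_sum _ (fun i _ => int1 i),
      integral_finset_sum _ (fun i _ => int2 i),
      integral_finset_sum _ (fun (i : Fin 3) _ => int3 ((0 : E3), e3 i) ((0 : E3), e3 i)),
      integral_finset_sum _ (fun (i : Fin 3) _ => int3 ((e3 i, 0) : E3 × E3) ((0 : E3), e3 i)),
      integral_finset_sum _ (fun (i : Fin 3) _ => int3 ((e3 i, 0) : E3 × E3) ((e3 i, 0) : E3 × E3))]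
  simp only [hT1, hT2, hTD]
  -- positivity of the quadratic form in the gradients
  have hKi : ∀ i : Fin 3, 0 ≤
      σ * (∫ p : E3 × E3, fderiv ℝ u p (0, e3 i) * fderiv ℝ u p (0, e3 i))
      + 2 * γ * (∫ p : E3 × E3, fderiv ℝ u p (e3 i, 0) * fderiv ℝ u p (0, e3 i))
      + α * (∫ p : E3 × E3, fderiv ℝ u p (e3 i, 0) * fderiv ℝ u p (e3 i, 0)) := by
    intro i
    have hcomb : σ * (∫ p : E3 × E3, fderiv ℝ u p (0, e3 i) * fderiv ℝ u p (0, e3 i))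
        + 2 * γ * (∫ p : E3 × E3, fderiv ℝ u p (e3 i, 0) * fderiv ℝ u p (0, e3 i))
        + α * (∫ p : E3 × E3, fderiv ℝ u p (e3 i, 0) * fderiv ℝ u p (e3 i, 0))
        = ∫ p : E3 × E3,
            (σ * (fderiv ℝ u p (0, e3 i) * fderiv ℝ u p (0, e3 i))
            + 2 * γ * (fderiv ℝ u p (e3 i, 0) * fderiv ℝ u p (0, e3 i))
            + α * (fderiv ℝ u p (e3 i, 0) * fderiv ℝ u p (e3 i, 0))) := by
      have Q1 : Integrable (fun p : E3 × E3 =>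
          σ * (fderiv ℝ u p (0, e3 i) * fderiv ℝ u p (0, e3 i))) :=
        (intDD _ _).const_mul σ
      have Q2 : Integrable (fun p : E3 × E3 =>
          2 * γ * (fderiv ℝ u p (e3 i, 0) * fderiv ℝ u p (0, e3 i))) :=
        (intDD _ _).const_mul (2 * γ)
      have Q3 : Integrable (fun p : E3 × E3 =>
          α * (fderiv ℝ u p (e3 i, 0) * fderiv ℝ u p (e3 i, 0))) :=
        (intDD _ _).const_mul α
      have Q12 : Integrable (fun p : E3 × E3 =>
          σ * (fderiv ℝ u p (0, e3 i) * fderiv ℝ u p (0, e3 i))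
          + 2 * γ * (fderiv ℝ u p (e3 i, 0) * fderiv ℝ u p (0, e3 i))) := Q1.add Q2
      rw [integral_add Q12 Q3, integral_add Q1 Q2,
          integral_const_mul, integral_const_mul, integral_const_mul]
    rw [hcomb]
    apply integral_nonneg
    intro p
    simp only [Pi.zero_apply]
    beta_reduce
    have ha := sq_nonneg (γ * fderiv ℝ u p (e3 i, 0) + σ * fderiv ℝ u p (0, e3 i))
    have hb := sq_nonneg (fderiv ℝ u p (e3 i, 0))
    have hc : 0 ≤ (α * σ - γ ^ 2) * fderiv ℝ u p (e3 i, 0) ^ 2 :=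
      mul_nonneg (by linarith) hb
    nlinarith [hσ, ha, hc, hσ.le]
  have h0 := hKi 0
  have h1 := hKi 1
  have h2 := hKi 2
  simp only [Fin.sum_univ_three] at h0 h1 h2 ⊢
  nlinarith [h0, h1, h2]

end
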